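/- For crossingless matchings a, b on 2n points, the number of closed curves formed by gluing a to the reflection of b (i.e., the planar closed 1-manifold a ∪ b̄) is between 1 and n, and it equals n if and only if a = b. -/
import Mathlib


/-- A crossingless matching on `2*n` points on a line: a fixed-point-free
involution of `Fin (2*n)` with no crossing pairs. -/
def IsCrossinglessMatching {n : ℕ} (f : Equiv.Perm (Fin (2 * n))) : Prop :=
  Function.Involutive f ∧ (∀ i, f i ≠ i) ∧
    ∀ a c : Fin (2 * n), ¬ (a < c ∧ c < f a ∧ f a < f c)


private lemma stmt13_key {m : ℕ} (a : Equiv.Perm (Fin m)) (hai : Function.Involutive a) :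
    ∀ g ∈ Subgroup.closure {a, a}, ∀ y : Fin m, g y = y ∨ g y = a y := by
  have ha2 : a * a = 1 := Equiv.ext hai
  intro g hg y
  rw [Set.pair_eq_singleton, ← Subgroup.zpowers_eq_closure] at hg
  obtain ⟨k, rfl⟩ := Subgroup.mem_zpowers_iff.mp hg
  rcases Int.even_or_odd k with ⟨p, rfl⟩ | ⟨p, rfl⟩
  · left
    have h1 : a ^ (p + p) = 1 := by
      rw [← two_mul, zpow_mul, zpow_two, ha2, one_zpow]
    rw [h1]; rfl
  · right
    have h1 : a ^ (2 * p + 1) = a := by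
      rw [zpow_add, zpow_mul, zpow_two, ha2, one_zpow, one_mul, zpow_one]
    rw [h1]

set_option maxHeartbeats 2000000 in
/-- For crossingless matchings `a, b` on `2n` points, the number of closed
curves of the planar 1-manifold obtained by gluing `a` to the reflection of
`b` — i.e. the number of orbits of the group generated by the two involutions
— is between `1` and `n`, and it equals `n` if and only if `a = b`. -/
theorem stmt_13 (n : ℕ) (hn : 0 < n) (a b : Equiv.Perm (Fin (2 * n)))
    (ha : IsCrossinglessMatching a) (hb : IsCrossinglessMatching b) :
    1 ≤ Nat.card (Quotient (MulAction.orbitRel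
        (Subgroup.closure {a, b} : Subgroup (Equiv.Perm (Fin (2 * n))))
        (Fin (2 * n)))) ∧
    Nat.card (Quotient (MulAction.orbitRel
        (Subgroup.closure {a, b} : Subgroup (Equiv.Perm (Fin (2 * n))))
        (Fin (2 * n)))) ≤ n ∧
    (Nat.card (Quotient (MulAction.orbitRel
        (Subgroup.closure {a, b} : Subgroup (Equiv.Perm (Fin (2 * n))))
        (Fin (2 * n)))) = n ↔ a = b) := by
  classical
  obtain ⟨hai, haf, -⟩ := ha
  obtain ⟨hbi, hbf, -⟩ := hb
  set G : Subgroup (Equiv.Perm (Fin (2 * n))) := Subgroup.closure {a, b} with hG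
  have haG : a ∈ G := Subgroup.subset_closure (by simp)
  have hbG : b ∈ G := Subgroup.subset_closure (by simp)
  set Ω := MulAction.orbitRel.Quotient G (Fin (2 * n)) with hΩ
  have hfinΩ : Finite Ω := Quotient.finite _
  have hftΩ : Fintype Ω := Fintype.ofFinite _
  -- membership facts
  have hmem : ∀ (c : Equiv.Perm (Fin (2 * n))), c ∈ G → ∀ x : Fin (2 * n),
      c x ∈ MulAction.orbit G x := fun c hc x => ⟨⟨c, hc⟩, rfl⟩
  have horbfin : ∀ x : Fin (2 * n), (MulAction.orbit G x).Finite :=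
    fun x => Set.toFinite _
  -- each orbit has at least 2 elements
  have h2le : ∀ x : Fin (2 * n), 2 ≤ (MulAction.orbit G x).ncard := by
    intro x
    exact (Set.one_lt_ncard_iff (horbfin x)).mpr
      ⟨a x, x, hmem a haG x, MulAction.mem_orbit_self x, haf x⟩
  -- total count
  have hsum : ∑ ω : Ω, (MulAction.orbit G ω.out).ncard = 2 * n := by
    have h1 : Nat.card (Fin (2 * n)) =
        Nat.card (Σ ω : Ω, MulAction.orbit G ω.out) :=
      Nat.card_congr (MulAction.selfEquivSigmaOrbits G (Fin (2 * n)))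
    rw [Nat.card_eq_fintype_card, Fintype.card_fin] at h1
    rw [Nat.card_eq_fintype_card, Fintype.card_sigma] at h1
    calc ∑ ω : Ω, (MulAction.orbit G ω.out).ncard
        = ∑ ω : Ω, Fintype.card (MulAction.orbit G ω.out) :=
          Finset.sum_congr rfl (fun ω _ => by
            rw [Set.ncard_eq_toFinset_card', Set.toFinset_card])
      _ = 2 * n := h1.symm
  have hcardΩ : Nat.card (Quotient (MulAction.orbitRel G (Fin (2 * n))))
      = Fintype.card Ω := Nat.card_eq_fintype_card
  have hout : ∀ x : Fin (2 * n),
      MulAction.orbit G (Quotient.out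
        (Quotient.mk (MulAction.orbitRel G (Fin (2 * n))) x)) =
      MulAction.orbit G x := by
    intro x
    rw [MulAction.orbit_eq_iff]
    have h := Quotient.exact
      (Quotient.out_eq (Quotient.mk (MulAction.orbitRel G (Fin (2 * n))) x))
    exact h
  refine ⟨?_, ?_, ?_⟩
  · rw [hcardΩ]
    have : Nonempty Ω :=
      ⟨Quotient.mk (MulAction.orbitRel G (Fin (2 * n))) ⟨0, by omega⟩⟩
    exact Fintype.card_pos
  · rw [hcardΩ]
    have h := Finset.sum_le_sum (s := (Finset.univ : Finset Ω))
      (f := fun _ => 2) (g := fun ω => (MulAction.orbit G ω.out).ncard)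
      (fun ω _ => h2le ω.out)
    rw [hsum, Finset.sum_const, Finset.card_univ, smul_eq_mul] at h
    omega
  · rw [hcardΩ]
    constructor
    · -- card = n ⇒ a = b : all orbits have exactly 2 elements
      intro hcard
      have heq : ∑ _ω : Ω, (2 : ℕ) = ∑ ω : Ω, (MulAction.orbit G ω.out).ncard := by
        rw [hsum, Finset.sum_const, Finset.card_univ, smul_eq_mul, hcard, mul_comm]
      have hall : ∀ ω : Ω, (MulAction.orbit G ω.out).ncard = 2 := fun ω =>
        ((Finset.sum_eq_sum_iff_of_le (fun ω _ => h2le ω.out)).mp heq ω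
          (Finset.mem_univ ω)).symm
      have horb2 : ∀ x : Fin (2 * n), (MulAction.orbit G x).ncard = 2 := by
        intro x
        have h := hall (Quotient.mk (MulAction.orbitRel G (Fin (2 * n))) x)
        rwa [hout x] at h
      ext x
      obtain ⟨u, v, huv, hset⟩ := Set.ncard_eq_two.mp (horb2 x)
      have hx : x ∈ MulAction.orbit G x := MulAction.mem_orbit_self x
      have hax : a x ∈ MulAction.orbit G x := hmem a haG x
      have hbx : b x ∈ MulAction.orbit G x := hmem b hbG x
      rw [hset] at hx hax hbx
      simp only [Set.mem_insert_iff, Set.mem_singleton_iff] at hx hax hbx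
      rcases hx with rfl | rfl
      · rcases hax with h1 | h1
        · exact absurd h1 (haf x)
        · rcases hbx with h2 | h2
          · exact absurd h2 (hbf x)
          · rw [h1, h2]
      · rcases hax with h1 | h1
        · rcases hbx with h2 | h2
          · rw [h1, h2]
          · exact absurd h2 (hbf x)
        · exact absurd h1 (haf x)
    · -- a = b ⇒ card = n : all orbits are {x, a x}
      rintro rfl
      have key : ∀ g ∈ G, ∀ y : Fin (2 * n), g y = y ∨ g y = a y := by
        rw [hG]
        exact stmt13_key a hai
      have hsub : ∀ x : Fin (2 * n), MulAction.orbit G x ⊆ {x, a x} := by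
        intro x y hy
        obtain ⟨⟨g, hg⟩, rfl⟩ := hy
        rcases key g hg x with h | h
        · exact Or.inl h
        · exact Or.inr h
      have horb2 : ∀ x : Fin (2 * n), (MulAction.orbit G x).ncard = 2 := by
        intro x
        refine le_antisymm ?_ (h2le x)
        calc (MulAction.orbit G x).ncard ≤ ({x, a x} : Set (Fin (2 * n))).ncard :=
              Set.ncard_le_ncard (hsub x) (Set.toFinite _)
          _ ≤ 2 := (Set.ncard_insert_le _ _).trans (by simp)
      have htot : ∑ ω : Ω, (MulAction.orbit G ω.out).ncard = 2 * Fintype.card Ω := by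
        rw [Finset.sum_congr rfl (fun ω _ => horb2 ω.out), Finset.sum_const,
          Finset.card_univ, smul_eq_mul, mul_comm]
      rw [hsum] at htot
      omega
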